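/- arXiv:1201.2674 — 8 statements merged into one kernel-verified Lean document; each statement's English description precedes it below -/
import Mathlib

section
/- Let g be a Lie algebra over a field of characteristic zero whose bracket also satisfies the pre-Lie identity [[x,y],z] − [x,[y,z]] = [[x,z],y] − [x,[z,y]] for all x,y,z. Then g is two-step nilpotent, i.e., [[y,z],x] = 0 for all x,y,z. -/
/-!
For a Lie bracket the associator is `⁅⁅x, y⁆, z⁆ - ⁅x, ⁅y, z⁆⁆ = -⁅y, ⁅x, z⁆⁆` (Jacobi), so the
pre-Lie identity says exactly that `⁅y, ⁅x, z⁆⁆` is symmetric in `y` and `z`. Since it is also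
antisymmetric in `x` and `z`, the Jacobi identity collapses to `⁅x, ⁅y, z⁆⁆ = 0`.
-/

section

variable {L : Type*} [LieRing L]

theorem lie_lie_sub_lie_lie (x y z : L) : ⁅⁅x, y⁆, z⁆ - ⁅x, ⁅y, z⁆⁆ = -⁅y, ⁅x, z⁆⁆ := by
  rw [lie_lie]
  abel

theorem lie_lie_comm_of_preLie
    (hpre : ∀ x y z : L, ⁅⁅x, y⁆, z⁆ - ⁅x, ⁅y, z⁆⁆ = ⁅⁅x, z⁆, y⁆ - ⁅x, ⁅z, y⁆⁆) (x y z : L) :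
    ⁅y, ⁅x, z⁆⁆ = ⁅z, ⁅x, y⁆⁆ := by
  simpa only [lie_lie_sub_lie_lie, neg_inj] using hpre x y z

theorem lie_lie_eq_zero_of_lie_lie_comm (hcomm : ∀ x y z : L, ⁅y, ⁅x, z⁆⁆ = ⁅z, ⁅x, y⁆⁆)
    (x y z : L) : ⁅x, ⁅y, z⁆⁆ = 0 := by
  have hskew : ⁅y, ⁅z, x⁆⁆ = -⁅z, ⁅x, y⁆⁆ := by
    rw [← lie_skew z x, lie_neg, hcomm]
  simpa only [hskew, neg_add_cancel_right] using lie_jacobi x y z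

end

theorem preLie_bracket_implies_two_step_nilpotent_general
    {L : Type*} [LieRing L]
    (hpre : ∀ x y z : L, ⁅⁅x, y⁆, z⁆ - ⁅x, ⁅y, z⁆⁆ = ⁅⁅x, z⁆, y⁆ - ⁅x, ⁅z, y⁆⁆) :
    ∀ x y z : L, ⁅⁅y, z⁆, x⁆ = 0 := by
  intro x y z
  rw [← lie_skew, lie_lie_eq_zero_of_lie_lie_comm (lie_lie_comm_of_preLie hpre), neg_zero]

/-- A Lie algebra whose bracket also satisfies the pre-Lie identity is
two-step nilpotent. -/
theorem preLie_bracket_implies_two_step_nilpotent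
    {K L : Type*} [Field K] [CharZero K] [LieRing L] [LieAlgebra K L]
    (hpre : ∀ x y z : L, ⁅⁅x, y⁆, z⁆ - ⁅x, ⁅y, z⁆⁆ = ⁅⁅x, z⁆, y⁆ - ⁅x, ⁅z, y⁆⁆) :
    ∀ x y z : L, ⁅⁅y, z⁆, x⁆ = 0 :=
  preLie_bracket_implies_two_step_nilpotent_general hpre
end

section
/- Let g be a Lie algebra over a field of characteristic zero whose bracket satisfies the G4-associativity identity [[x,y],z] − [x,[y,z]] = [[z,y],x] − [z,[y,x]] for all x,y,z. Then g is two-step nilpotent. -/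
/-! By antisymmetry of the bracket, the right-hand side of the G4 identity is the negative of the
left-hand side, so the identity says that twice the associator vanishes. Without 2-torsion the
bracket is therefore associative, and comparing `⁅⁅x, y⁆, z⁆ = ⁅x, ⁅y, z⁆⁆` with the Jacobi
identity `⁅⁅x, y⁆, z⁆ = ⁅x, ⁅y, z⁆⁆ - ⁅y, ⁅x, z⁆⁆` kills every double bracket. -/

section LieRing

variable {L : Type*} [LieRing L]

theorem lie_associator_swap (x y z : L) :
    ⁅⁅z, y⁆, x⁆ - ⁅z, ⁅y, x⁆⁆ = -(⁅⁅x, y⁆, z⁆ - ⁅x, ⁅y, z⁆⁆) := by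
  rw [← lie_skew ⁅z, y⁆ x, ← lie_skew z y, ← lie_skew z ⁅y, x⁆, ← lie_skew y x, lie_neg, neg_lie]
  abel

theorem lie_lie_eq_zero_of_lie_assoc (h : ∀ x y z : L, ⁅⁅x, y⁆, z⁆ = ⁅x, ⁅y, z⁆⁆)
    (x y z : L) : ⁅⁅x, y⁆, z⁆ = 0 := by
  have lie_lie_right_eq_zero : ∀ a b c : L, ⁅b, ⁅a, c⁆⁆ = 0 := fun a b c =>
    sub_eq_self.mp ((h a b c).symm.trans (lie_lie a b c)).symm
  rw [h, lie_lie_right_eq_zero]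

theorem lie_assoc_of_g4 [IsAddTorsionFree L]
    (hG4 : ∀ x y z : L, ⁅⁅x, y⁆, z⁆ - ⁅x, ⁅y, z⁆⁆ = ⁅⁅z, y⁆, x⁆ - ⁅z, ⁅y, x⁆⁆) (x y z : L) :
    ⁅⁅x, y⁆, z⁆ = ⁅x, ⁅y, z⁆⁆ := by
  have two_nsmul_associator : 2 • (⁅⁅x, y⁆, z⁆ - ⁅x, ⁅y, z⁆⁆) = 0 := by
    rw [two_nsmul]
    exact eq_neg_iff_add_eq_zero.mp ((hG4 x y z).trans (lie_associator_swap x y z))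
  exact sub_eq_zero.mp (two_nsmul_eq_zero.mp two_nsmul_associator)

end LieRing

/-- A Lie algebra whose bracket satisfies the G4-associativity identity is
two-step nilpotent. -/
theorem g4_bracket_implies_two_step_nilpotent
    {K L : Type*} [Field K] [CharZero K] [LieRing L] [LieAlgebra K L]
    (hG4 : ∀ x y z : L, ⁅⁅x, y⁆, z⁆ - ⁅x, ⁅y, z⁆⁆ = ⁅⁅z, y⁆, x⁆ - ⁅z, ⁅y, x⁆⁆) :
    ∀ x y z : L, ⁅⁅x, y⁆, z⁆ = 0 := by
  have : IsAddTorsionFree L := .of_isTorsionFree K L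
  exact lie_lie_eq_zero_of_lie_assoc (lie_assoc_of_g4 hG4)
end

section
/- Let g be a Lie algebra over a field of characteristic zero. The Lie bracket is cubic associative (satisfies ((xy)z)t = (x(yz))t = x((yz)t) = x(y(zt)) = (xy)(zt) = ((xy)z)t with the bracket as multiplication) if and only if g is 3-step nilpotent, i.e., [[[X,Y],Z],T] = 0 for all X,Y,Z,T. -/
def IsThreeStepNilpotent (L : Type*) [LieRing L] : Prop :=
  ∀ x y z t : L, ⁅⁅⁅x, y⁆, z⁆, t⁆ = 0

section

variable {L : Type*} [LieRing L]

/-- Jacobi turns `((xy)z)t = (x(yz))t` into the vanishing of every `(y(xz))t`. -/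
theorem isThreeStepNilpotent_of_forall_lie_lie_lie_eq
    (h : ∀ x y z t : L, ⁅⁅⁅x, y⁆, z⁆, t⁆ = ⁅⁅x, ⁅y, z⁆⁆, t⁆) : IsThreeStepNilpotent L := by
  have h_inner : ∀ x y z t : L, ⁅⁅y, ⁅x, z⁆⁆, t⁆ = 0 := fun x y z t => by
    simpa only [lie_lie x y z, sub_lie, sub_eq_self] using h x y z t
  intro x y z t
  rw [lie_lie x y z, sub_lie, h_inner, h_inner, sub_zero]

namespace IsThreeStepNilpotent

variable (h : IsThreeStepNilpotent L) (x y z t : L)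
include h

theorem lie_lie_lie_right : ⁅x, ⁅⁅y, z⁆, t⁆⁆ = 0 := by
  rw [← lie_skew, h, neg_zero]

theorem lie_lie_right_lie : ⁅⁅x, ⁅y, z⁆⁆, t⁆ = 0 := by
  rw [← lie_skew x, neg_lie, h, neg_zero]

theorem lie_right_lie_right : ⁅x, ⁅y, ⁅z, t⁆⁆⁆ = 0 := by
  rw [← lie_skew, h.lie_lie_right_lie, neg_zero]

theorem lie_lie_lie_lie : ⁅⁅x, y⁆, ⁅z, t⁆⁆ = 0 := by
  rw [leibniz_lie, h, h.lie_lie_lie_right, zero_add]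

end IsThreeStepNilpotent

end

theorem lie_bracket_cubic_assoc_iff_three_step_nilpotent_general
    {L : Type*} [LieRing L] :
    ((∀ x y z t : L, ⁅⁅⁅x, y⁆, z⁆, t⁆ = ⁅⁅x, ⁅y, z⁆⁆, t⁆) ∧
     (∀ x y z t : L, ⁅⁅x, ⁅y, z⁆⁆, t⁆ = ⁅x, ⁅⁅y, z⁆, t⁆⁆) ∧
     (∀ x y z t : L, ⁅x, ⁅⁅y, z⁆, t⁆⁆ = ⁅x, ⁅y, ⁅z, t⁆⁆⁆) ∧
     (∀ x y z t : L, ⁅x, ⁅y, ⁅z, t⁆⁆⁆ = ⁅⁅x, y⁆, ⁅z, t⁆⁆) ∧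
     (∀ x y z t : L, ⁅⁅x, y⁆, ⁅z, t⁆⁆ = ⁅⁅⁅x, y⁆, z⁆, t⁆)) ↔
    (∀ x y z t : L, ⁅⁅⁅x, y⁆, z⁆, t⁆ = 0) := by
  constructor
  · rintro ⟨h_assoc, -, -, -, -⟩
    exact isThreeStepNilpotent_of_forall_lie_lie_lie_eq h_assoc
  · intro h
    have hL : IsThreeStepNilpotent L := h
    refine ⟨?_, ?_, ?_, ?_, ?_⟩ <;> intro x y z t <;>
      simp only [h, hL.lie_lie_right_lie, hL.lie_lie_lie_right, hL.lie_right_lie_right,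
        hL.lie_lie_lie_lie]

/-- The Lie bracket is cubic associative iff the Lie algebra is 3-step
nilpotent. -/
theorem lie_bracket_cubic_assoc_iff_three_step_nilpotent
    {K L : Type*} [Field K] [CharZero K] [LieRing L] [LieAlgebra K L] :
    ((∀ x y z t : L, ⁅⁅⁅x, y⁆, z⁆, t⁆ = ⁅⁅x, ⁅y, z⁆⁆, t⁆) ∧
     (∀ x y z t : L, ⁅⁅x, ⁅y, z⁆⁆, t⁆ = ⁅x, ⁅⁅y, z⁆, t⁆⁆) ∧
     (∀ x y z t : L, ⁅x, ⁅⁅y, z⁆, t⁆⁆ = ⁅x, ⁅y, ⁅z, t⁆⁆⁆) ∧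
     (∀ x y z t : L, ⁅x, ⁅y, ⁅z, t⁆⁆⁆ = ⁅⁅x, y⁆, ⁅z, t⁆⁆) ∧
     (∀ x y z t : L, ⁅⁅x, y⁆, ⁅z, t⁆⁆ = ⁅⁅⁅x, y⁆, z⁆, t⁆)) ↔
    (∀ x y z t : L, ⁅⁅⁅x, y⁆, z⁆, t⁆ = 0) :=
  lie_bracket_cubic_assoc_iff_three_step_nilpotent_general
end

section
/- Let g be a Lie algebra over a field of characteristic zero whose bracket satisfies [[[X,Y],Z],T] = [[X,[Y,Z]],T] for all X,Y,Z,T. Then [[[X,Y],Z],T] = 0 for all X,Y,Z,T, i.e., g is 3-step nilpotent. -/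
/-- Jacobi rewrites `⁅⁅B, A⁆, C⁆` as `⁅B, ⁅A, C⁆⁆ - ⁅A, ⁅B, C⁆⁆`; the hypothesis at `B A C T` then
cancels the first term. -/
theorem lie_lie_lie_eq_zero_of_lie_lie_lie_eq_lie_lie_lie {L : Type*} [LieRing L]
    (h : ∀ X Y Z T : L, ⁅⁅⁅X, Y⁆, Z⁆, T⁆ = ⁅⁅X, ⁅Y, Z⁆⁆, T⁆) (A B C T : L) :
    ⁅⁅A, ⁅B, C⁆⁆, T⁆ = 0 := by
  have hBACT := h B A C T
  rw [lie_lie B A C, sub_lie] at hBACT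
  exact sub_eq_self.mp hBACT

theorem cubic_assoc_first_relation_implies_three_step_nilpotent_general
    {L : Type*} [LieRing L]
    (h : ∀ X Y Z T : L, ⁅⁅⁅X, Y⁆, Z⁆, T⁆ = ⁅⁅X, ⁅Y, Z⁆⁆, T⁆) :
    ∀ X Y Z T : L, ⁅⁅⁅X, Y⁆, Z⁆, T⁆ = 0 := by
  intro X Y Z T
  rw [h, lie_lie_lie_eq_zero_of_lie_lie_lie_eq_lie_lie_lie h]

/-- If the bracket satisfies `[[[X,Y],Z],T] = [[X,[Y,Z]],T]` then the Lie
algebra is 3-step nilpotent. -/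
theorem cubic_assoc_first_relation_implies_three_step_nilpotent
    {K L : Type*} [Field K] [CharZero K] [LieRing L] [LieAlgebra K L]
    (h : ∀ X Y Z T : L, ⁅⁅⁅X, Y⁆, Z⁆, T⁆ = ⁅⁅X, ⁅Y, Z⁆⁆, T⁆) :
    ∀ X Y Z T : L, ⁅⁅⁅X, Y⁆, Z⁆, T⁆ = 0 :=
  cubic_assoc_first_relation_implies_three_step_nilpotent_general h
end

section
/- Let g be a Lie algebra over a field of characteristic zero and define the ternary product T(x,y,z) = [[x,y],z]. If T is totally associative, i.e., T(T(x,y,z),t,u) = T(x,T(y,z,t),u) = T(x,y,T(z,t,u)) for all x,y,z,t,u, then T(T(x,y,z),t,u) = 0 for all x,y,z,t,u; in particular g is 4-step nilpotent. -/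
/-!
Write `P(a,b,c,d,e) = T(T(a,b,c),d,e)`. The first associativity law and antisymmetry make `P`
change sign under the cyclic rotation of its first four arguments, and the second law together
with the Jacobi identity gives `P(a,b,c,d,e) = P(c,d,e,b,a) - P(c,d,e,a,b)`. Instantiating the
latter at the five cyclic shifts of `(x,y,z,t,u)` and normalising by rotations yields five linear
relations between five values of `P`, whose combination with coefficients `2, -1, -1, 2, -1` is
`3 • P(x,y,z,t,u) = 0`; characteristic zero finishes.
-/

section LieTriple

variable {L : Type*} [LieRing L]

def lieTriple (x y z : L) : L := ⁅⁅x, y⁆, z⁆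

theorem lieTriple_eq_sub (a b c : L) :
    lieTriple a b c = lieTriple c b a - lieTriple c a b := by
  simp only [lieTriple]
  rw [← lie_skew ⁅a, b⁆ c, ← lie_skew ⁅c, a⁆ b, ← lie_skew c b, neg_lie, ← lie_skew ⁅b, c⁆ a]
  linear_combination (norm := module) -lie_jacobi a b c

theorem lieTriple_lieTriple_rotate
    (h1 : ∀ x y z t u : L, lieTriple (lieTriple x y z) t u = lieTriple x (lieTriple y z t) u)
    (a b c d e : L) :
    lieTriple (lieTriple a b c) d e = -lieTriple (lieTriple b c d) a e := by
  rw [h1]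
  simp only [lieTriple]
  rw [← lie_skew a, neg_lie]

theorem lieTriple_lieTriple_rotate_two
    (h1 : ∀ x y z t u : L, lieTriple (lieTriple x y z) t u = lieTriple x (lieTriple y z t) u)
    (a b c d e : L) :
    lieTriple (lieTriple a b c) d e = lieTriple (lieTriple c d a) b e := by
  rw [lieTriple_lieTriple_rotate h1, lieTriple_lieTriple_rotate h1, neg_neg]

theorem lieTriple_lieTriple_rotate_inv
    (h1 : ∀ x y z t u : L, lieTriple (lieTriple x y z) t u = lieTriple x (lieTriple y z t) u)
    (a b c d e : L) :
    lieTriple (lieTriple a b c) d e = -lieTriple (lieTriple d a b) c e := by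
  rw [lieTriple_lieTriple_rotate h1 d, neg_neg]

theorem lieTriple_lieTriple_eq_sub
    (h1 : ∀ x y z t u : L, lieTriple (lieTriple x y z) t u = lieTriple x (lieTriple y z t) u)
    (h2 : ∀ x y z t u : L, lieTriple x (lieTriple y z t) u = lieTriple x y (lieTriple z t u))
    (a b c d e : L) :
    lieTriple (lieTriple a b c) d e =
      lieTriple (lieTriple c d e) b a - lieTriple (lieTriple c d e) a b := by
  rw [h1, h2, lieTriple_eq_sub]

theorem three_nsmul_lieTriple_lieTriple_eq_zero
    (h1 : ∀ x y z t u : L, lieTriple (lieTriple x y z) t u = lieTriple x (lieTriple y z t) u)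
    (h2 : ∀ x y z t u : L, lieTriple x (lieTriple y z t) u = lieTriple x y (lieTriple z t u))
    (x y z t u : L) :
    3 • lieTriple (lieTriple x y z) t u = 0 := by
  have hx := lieTriple_lieTriple_eq_sub h1 h2 x y z t u
  have hy := lieTriple_lieTriple_eq_sub h1 h2 y z t u x
  have hz := lieTriple_lieTriple_eq_sub h1 h2 z t u x y
  have ht := lieTriple_lieTriple_eq_sub h1 h2 t u x y z
  have hu := lieTriple_lieTriple_eq_sub h1 h2 u x y z t
  rw [lieTriple_lieTriple_rotate_inv h1 z t u y, lieTriple_lieTriple_rotate_inv h1 z t u x] at hx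
  rw [lieTriple_lieTriple_rotate_two h1 t u x z, lieTriple_lieTriple_rotate_two h1 t u x y] at hy
  rw [lieTriple_lieTriple_rotate_inv h1 z t u x, lieTriple_lieTriple_rotate h1 u x y t,
    lieTriple_lieTriple_rotate h1 u x y z] at hz
  rw [lieTriple_lieTriple_rotate_two h1 t u x y] at ht
  rw [lieTriple_lieTriple_rotate h1 u x y z, lieTriple_lieTriple_rotate_inv h1 y z t x] at hu
  linear_combination (norm := module) 2 • hx - hy - hz + 2 • ht - hu

end LieTriple

/-- If the Lie triple product `T(x,y,z) = [[x,y],z]` is totally associative,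
then `T(T(x,y,z),t,u) = 0` for all `x,y,z,t,u`; in particular the Lie algebra
is 4-step nilpotent. -/
theorem lie_triple_totally_assoc_implies_four_step_nilpotent
    {K L : Type*} [Field K] [CharZero K] [LieRing L] [LieAlgebra K L]
    (h1 : ∀ x y z t u : L, ⁅⁅⁅⁅x, y⁆, z⁆, t⁆, u⁆ = ⁅⁅x, ⁅⁅y, z⁆, t⁆⁆, u⁆)
    (h2 : ∀ x y z t u : L, ⁅⁅x, ⁅⁅y, z⁆, t⁆⁆, u⁆ = ⁅⁅x, y⁆, ⁅⁅z, t⁆, u⁆⁆) :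
    ∀ x y z t u : L, ⁅⁅⁅⁅x, y⁆, z⁆, t⁆, u⁆ = 0 := by
  intro x y z t u
  have h3 := three_nsmul_lieTriple_lieTriple_eq_zero h1 h2 x y z t u
  rw [← Nat.cast_smul_eq_nsmul K] at h3
  exact (smul_eq_zero.mp h3).resolve_left three_ne_zero
end

section
/- Let μ0 be the bracket of a two-step nilpotent Lie algebra g0 and φ a skew-symmetric bilinear map on g0 with values in g0. Then the Hochschild coboundary δ_H φ and the Chevalley coboundary δ_C φ both vanish if and only if φ(μ0(X,Y),Z) + μ0(φ(X,Y),Z) = 0 for all X,Y,Z in g0. -/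
/-!
With `A(X,Y,Z) = φ([X,Y],Z) + [φ(X,Y),Z]`, skew-symmetry of `φ` and of the bracket give
`δ_H φ(X,Y,Z) = -(A(X,Y,Z) + A(Y,Z,X))` and `δ_C φ(X,Y,Z) = A(X,Y,Z) + A(Y,Z,X) + A(Z,X,Y)`.
So `δ_H φ = 0` says that `A` changes sign under cyclic rotation; three rotations then give
`A = -A`, hence `A = 0` in characteristic zero.
-/

theorem eq_zero_of_forall_eq_neg_rotate {α M : Type*} [AddGroup M] [IsAddTorsionFree M]
    {f : α → α → α → M} (hf : ∀ x y z, f x y z = -f y z x) (x y z : α) : f x y z = 0 :=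
  self_eq_neg.mp <| calc
    f x y z = -f y z x := hf x y z
    _ = f z x y := by rw [hf y z x, neg_neg]
    _ = -f x y z := hf z x y

section

variable {L : Type*} [LieRing L]

def cocycleTerm (φ : L → L → L) (X Y Z : L) : L :=
  φ ⁅X, Y⁆ Z + ⁅φ X Y, Z⁆

theorem hochschild_coboundary_eq_neg_cocycleTerm {φ : L → L → L}
    (hskew : ∀ X Y, φ X Y = -φ Y X) (X Y Z : L) :
    ⁅X, φ Y Z⁆ - φ ⁅X, Y⁆ Z + φ X ⁅Y, Z⁆ - ⁅φ X Y, Z⁆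
      = -(cocycleTerm φ X Y Z + cocycleTerm φ Y Z X) := by
  rw [hskew X, ← lie_skew X, cocycleTerm, cocycleTerm]
  abel

theorem chevalley_coboundary_eq_cocycleTerm (φ : L → L → L) (X Y Z : L) :
    ⁅φ X Y, Z⁆ + ⁅φ Y Z, X⁆ + ⁅φ Z X, Y⁆ + φ ⁅X, Y⁆ Z + φ ⁅Y, Z⁆ X + φ ⁅Z, X⁆ Y
      = cocycleTerm φ X Y Z + cocycleTerm φ Y Z X + cocycleTerm φ Z X Y := by
  simp only [cocycleTerm]
  abel

end

theorem hochschild_chevalley_cocycle_iff_general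
    {K L : Type*} [Field K] [CharZero K] [LieRing L] [LieAlgebra K L]
    (φ : L →ₗ[K] L →ₗ[K] L)
    (hskew : ∀ X Y : L, φ X Y = - φ Y X) :
    ((∀ X Y Z : L, ⁅X, φ Y Z⁆ - φ ⁅X, Y⁆ Z + φ X ⁅Y, Z⁆ - ⁅φ X Y, Z⁆ = 0) ∧
     (∀ X Y Z : L,
       ⁅φ X Y, Z⁆ + ⁅φ Y Z, X⁆ + ⁅φ Z X, Y⁆
         + φ ⁅X, Y⁆ Z + φ ⁅Y, Z⁆ X + φ ⁅Z, X⁆ Y = 0)) ↔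
    (∀ X Y Z : L, φ ⁅X, Y⁆ Z + ⁅φ X Y, Z⁆ = 0) := by
  have : IsAddTorsionFree L := .of_isTorsionFree K L
  simp only [hochschild_coboundary_eq_neg_cocycleTerm (φ := fun X Y => φ X Y) hskew,
    chevalley_coboundary_eq_cocycleTerm (fun X Y => φ X Y), neg_eq_zero]
  change _ ↔ ∀ X Y Z, cocycleTerm (fun X Y => φ X Y) X Y Z = 0
  constructor
  · rintro ⟨hH, -⟩
    exact eq_zero_of_forall_eq_neg_rotate fun X Y Z => eq_neg_of_add_eq_zero_left (hH X Y Z)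
  · intro h
    simp [h]

/-- On a two-step nilpotent Lie algebra, a skew-symmetric bilinear map `φ`
satisfies `δ_H φ = 0` and `δ_C φ = 0` iff
`φ([X,Y],Z) + [φ(X,Y),Z] = 0` for all `X,Y,Z`. -/
theorem hochschild_chevalley_cocycle_iff
    {K L : Type*} [Field K] [CharZero K] [LieRing L] [LieAlgebra K L]
    (h2 : ∀ X Y Z : L, ⁅⁅X, Y⁆, Z⁆ = 0)
    (φ : L →ₗ[K] L →ₗ[K] L)
    (hskew : ∀ X Y : L, φ X Y = - φ Y X) :
    ((∀ X Y Z : L, ⁅X, φ Y Z⁆ - φ ⁅X, Y⁆ Z + φ X ⁅Y, Z⁆ - ⁅φ X Y, Z⁆ = 0) ∧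
     (∀ X Y Z : L,
       ⁅φ X Y, Z⁆ + ⁅φ Y Z, X⁆ + ⁅φ Z X, Y⁆
         + φ ⁅X, Y⁆ Z + φ ⁅Y, Z⁆ X + φ ⁅Z, X⁆ Y = 0)) ↔
    (∀ X Y Z : L, φ ⁅X, Y⁆ Z + ⁅φ X Y, Z⁆ = 0) :=
  hochschild_chevalley_cocycle_iff_general φ hskew
end

section
/- Let h_{2p+1} be the (2p+1)-dimensional Heisenberg Lie algebra with basis X1,...,X_{2p+1} and brackets [X_{2i−1}, X_{2i}] = X_{2p+1} for 1 ≤ i ≤ p. Then the space of skew-symmetric bilinear maps φ: h × h → h satisfying φ([X,Y],Z) + [φ(X,Y),Z] = 0 for all X,Y,Z has dimension p(2p+1) over the base field. -/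
/-!
Let `z = B (last)` and let `ζ` be the `z`-coordinate, so that `z` is central and
`⁅X, Y⁆ = ζ ⁅X, Y⁆ • z`. For a cocycle `φ` the identity gives `⁅φ X Y, W⁆ = -ζ ⁅X, Y⁆ • φ z W`,
so `φ X Y - ζ ⁅X, Y⁆ • φ e f` is central for the symplectic pair `e = B 0`, `f = B 1`:
outside `K z`, every value `φ X Y` is `ζ ⁅X, Y⁆` times the single vector `φ e f`. Moreover
`φ z = φ ⁅e, f⁆` is forced to be `-⁅φ e f, ·⁆`. Hence `φ` is determined by the `2p` remaining
coordinates of `φ e f` and the `z`-coordinates of `φ (B i) (B j)`, `i < j < 2p`, which are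
`p(2p-1)` more. Conversely every choice of these numbers occurs: for an alternating form `α` with
`α z = 0` and any `v`, `α X Y • z + ζ ⁅X, Y⁆ • v + ζ Y • ⁅v, X⁆ - ζ X • ⁅v, Y⁆` is a cocycle.
-/

open Module

/-- `⟨j, i⟩` stands for `i < j`; these pairs index the coordinates of an alternating form on
`Fin n → K`. -/
abbrev StrictPair (n : ℕ) := Σ j : Fin n, Fin j

namespace StrictPair

variable {n : ℕ}

def lo (q : StrictPair n) : Fin n := Fin.castLE q.1.isLt.le q.2

def hi (q : StrictPair n) : Fin n := q.1

theorem card_mul_two (n : ℕ) : Fintype.card (StrictPair n) * 2 = n * (n - 1) := by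
  simp only [Fintype.card_sigma, Fintype.card_fin]
  rw [Fin.sum_univ_eq_sum_range (fun j => j) n, Finset.sum_range_id_mul_two]

section Matrix

variable {K : Type*} [Ring K]

def skewMatrix (a : StrictPair n → K) : Matrix (Fin (n + 1)) (Fin (n + 1)) K := fun i j =>
  if h : i.val < j.val ∧ j.val < n then a ⟨⟨j, h.2⟩, ⟨i, h.1⟩⟩
  else if h : j.val < i.val ∧ i.val < n then -a ⟨⟨i, h.2⟩, ⟨j, h.1⟩⟩
  else 0

theorem skewMatrix_swap (a : StrictPair n → K) (i j : Fin (n + 1)) :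
    skewMatrix a j i = -skewMatrix a i j := by
  unfold skewMatrix
  split_ifs <;> first | (exfalso; omega) | simp

theorem skewMatrix_last_left (a : StrictPair n → K) (j : Fin (n + 1)) :
    skewMatrix a (Fin.last n) j = 0 := by
  have := j.isLt
  unfold skewMatrix
  rw [dif_neg (by simp only [Fin.val_last]; omega), dif_neg (by simp only [Fin.val_last]; omega)]

theorem skewMatrix_lo_hi (a : StrictPair n → K) (q : StrictPair n) :
    skewMatrix a q.lo.castSucc q.hi.castSucc = a q :=
  dif_pos ⟨q.2.isLt, q.1.isLt⟩

end Matrix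

section Form

variable {K L : Type*} [CommRing K] [AddCommGroup L] [Module K L]

noncomputable def skewForm (B : Basis (Fin (n + 1)) K L) (a : StrictPair n → K) :
    L →ₗ[K] L →ₗ[K] K :=
  Matrix.toLinearMap₂ B B (skewMatrix a)

variable (B : Basis (Fin (n + 1)) K L) (a : StrictPair n → K)

theorem skewForm_swap (X Y : L) : skewForm B a X Y = -skewForm B a Y X := by
  have h : skewForm B a = -(skewForm B a).flip := LinearMap.ext_basis B B fun i j => by
    simp only [skewForm, LinearMap.neg_apply, LinearMap.flip_apply,
      Matrix.toLinearMap₂_apply_basis, skewMatrix_swap a j i]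
  exact LinearMap.congr_fun (LinearMap.congr_fun h X) Y

theorem skewForm_last_left (X : L) : skewForm B a (B (Fin.last n)) X = 0 := by
  have h : skewForm B a (B (Fin.last n)) = 0 := B.ext fun j => by
    rw [skewForm, Matrix.toLinearMap₂_apply_basis, skewMatrix_last_left, LinearMap.zero_apply]
  exact LinearMap.congr_fun h X

theorem skewForm_lo_hi (q : StrictPair n) :
    skewForm B a (B q.lo.castSucc) (B q.hi.castSucc) = a q := by
  rw [skewForm, Matrix.toLinearMap₂_apply_basis, skewMatrix_lo_hi]

end Form

end StrictPair

section Basis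
variable {K L : Type*} [Semiring K] [AddCommMonoid L] [Module K L] {n : ℕ}

theorem Module.Basis.coord_last_castSucc (B : Basis (Fin (n + 1)) K L) (k : Fin n) :
    B.coord (Fin.last n) (B k.castSucc) = 0 := by
  simp [(Fin.castSucc_lt_last k).ne]

theorem Module.Basis.eq_coord_last_smul (B : Basis (Fin (n + 1)) K L) {u : L}
    (hu : ∀ k : Fin n, B.repr u k.castSucc = 0) :
    u = B.coord (Fin.last n) u • B (Fin.last n) := by
  refine B.ext_elem fun i => ?_
  induction i using Fin.lastCases with
  | last => simp
  | cast k => simp [hu k, (Fin.castSucc_lt_last k).ne]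

end Basis

section SkewCocycles

variable (K L : Type*) [CommRing K] [LieRing L] [LieAlgebra K L]

def skewCocycles : Submodule K (L →ₗ[K] L →ₗ[K] L) where
  carrier := {φ | (∀ X Y : L, φ X Y = - φ Y X) ∧ (∀ X Y Z : L, φ ⁅X, Y⁆ Z + ⁅φ X Y, Z⁆ = 0)}
  add_mem' {φ ψ} hφ hψ := by
    refine ⟨fun X Y => ?_, fun X Y Z => ?_⟩
    · simp only [LinearMap.add_apply, hφ.1 X Y, hψ.1 X Y, neg_add]
    · simp only [LinearMap.add_apply, add_lie]
      rw [add_add_add_comm, hφ.2 X Y Z, hψ.2 X Y Z, add_zero]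
  zero_mem' := by simp
  smul_mem' c φ hφ := by
    refine ⟨fun X Y => ?_, fun X Y Z => ?_⟩
    · simp only [LinearMap.smul_apply, hφ.1 X Y, smul_neg]
    · simp only [LinearMap.smul_apply, smul_lie]
      rw [← smul_add, hφ.2 X Y Z, smul_zero]

variable {K L}
variable (z : L) (ζ : L →ₗ[K] K)

def cocycleOf (α : L →ₗ[K] L →ₗ[K] K) (v : L) : L →ₗ[K] L →ₗ[K] L :=
  LinearMap.mk₂ K (fun X Y => α X Y • z + ζ ⁅X, Y⁆ • v + ζ Y • ⁅v, X⁆ - ζ X • ⁅v, Y⁆)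
    (fun X X' Y => by simp only [map_add, LinearMap.add_apply, add_lie, lie_add]; module)
    (fun c X Y => by
      simp only [map_smul, LinearMap.smul_apply, smul_lie, lie_smul, smul_eq_mul]; module)
    (fun X Y Y' => by simp only [map_add, lie_add]; module)
    (fun c X Y => by simp only [map_smul, smul_eq_mul, lie_smul]; module)

@[simp]
theorem cocycleOf_apply (α : L →ₗ[K] L →ₗ[K] K) (v X Y : L) :
    cocycleOf z ζ α v X Y = α X Y • z + ζ ⁅X, Y⁆ • v + ζ Y • ⁅v, X⁆ - ζ X • ⁅v, Y⁆ := rfl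

variable {z ζ}

theorem cocycleOf_mem_skewCocycles (hζz : ζ z = 1) (hz : ∀ X : L, ⁅z, X⁆ = 0)
    (hlie : ∀ X Y : L, ⁅X, Y⁆ = ζ ⁅X, Y⁆ • z)
    {α : L →ₗ[K] L →ₗ[K] K} (hα : ∀ X Y, α X Y = -α Y X) (hαz : ∀ X, α z X = 0) (v : L) :
    cocycleOf z ζ α v ∈ skewCocycles K L := by
  have hzv : ⁅v, z⁆ = 0 := by rw [← lie_skew, hz, neg_zero]
  refine ⟨fun X Y => ?_, fun X Y W => ?_⟩
  · simp only [cocycleOf_apply, hα X Y, ← lie_skew Y X, map_neg]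
    module
  · have h2 : ∀ U, ⁅⁅v, U⁆, W⁆ = 0 := fun U => by rw [hlie v U, smul_lie, hz, smul_zero]
    rw [hlie X Y]
    simp only [cocycleOf_apply, map_smul, LinearMap.smul_apply, hαz, smul_lie, hz, hzv,
      h2, add_lie, sub_lie, map_zero, hζz]
    module

theorem lie_apply_eq_of_mem_skewCocycles (hlie : ∀ X Y : L, ⁅X, Y⁆ = ζ ⁅X, Y⁆ • z)
    {φ : L →ₗ[K] L →ₗ[K] L} (hφ : φ ∈ skewCocycles K L) (X Y W : L) :
    ⁅φ X Y, W⁆ = -(ζ ⁅X, Y⁆ • φ z W) := by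
  rw [eq_neg_iff_add_eq_zero, add_comm, ← LinearMap.smul_apply, ← map_smul, ← hlie]
  exact hφ.2 X Y W

end SkewCocycles

section Heisenberg

variable {K L : Type*} [Field K] [LieRing L] [LieAlgebra K L] {p : ℕ}

def IsHeisenbergBasis (B : Basis (Fin (2 * p + 1)) K L) : Prop :=
  ∀ i j : Fin (2 * p + 1),
    ⁅B i, B j⁆ =
      if i.val % 2 = 0 ∧ j.val = i.val + 1 then B (Fin.last (2 * p))
      else if j.val % 2 = 0 ∧ i.val = j.val + 1 then -B (Fin.last (2 * p))
      else 0

namespace IsHeisenbergBasis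

variable {B : Basis (Fin (2 * p + 1)) K L} (hB : IsHeisenbergBasis B)
include hB

theorem lie_last_left (X : L) : ⁅B (Fin.last (2 * p)), X⁆ = 0 := by
  have hadz : LieAlgebra.ad K L (B (Fin.last (2 * p))) = 0 := B.ext fun j => by
    have := j.isLt
    rw [LieAlgebra.ad_apply, hB, if_neg (by simp only [Fin.val_last]; omega),
      if_neg (by simp only [Fin.val_last]; omega), LinearMap.zero_apply]
  simpa using LinearMap.congr_fun hadz X

theorem lie_eq_coord_smul (X Y : L) :
    ⁅X, Y⁆ = B.coord (Fin.last (2 * p)) ⁅X, Y⁆ • B (Fin.last (2 * p)) := by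
  let bracket : L →ₗ[K] L →ₗ[K] L := LinearMap.mk₂ K (⁅·, ·⁆) add_lie smul_lie lie_add lie_smul
  have h : bracket =
      bracket.compr₂ ((B.coord (Fin.last (2 * p))).smulRight (B (Fin.last (2 * p)))) :=
    LinearMap.ext_basis B B fun i j => by
      simp only [bracket, LinearMap.compr₂_apply, LinearMap.smulRight_apply, LinearMap.mk₂_apply,
        hB i j]
      split_ifs <;> simp
  simpa [bracket] using LinearMap.congr_fun (LinearMap.congr_fun h X) Y

theorem lie_castSucc_zero_one (h : 1 < 2 * p) :
    ⁅B (Fin.castSucc ⟨0, by omega⟩), B (Fin.castSucc ⟨1, h⟩)⁆ = B (Fin.last (2 * p)) := by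
  rw [hB, if_pos ⟨rfl, rfl⟩]

theorem repr_castSucc_eq_zero_of_forall_lie_eq_zero {u : L} (hu : ∀ j, ⁅u, B j⁆ = 0)
    (k : Fin (2 * p)) : B.repr u k.castSucc = 0 := by
  have expand : ∀ j, B.coord (Fin.last (2 * p)) ⁅u, B j⁆ =
      ∑ i, B.repr u i * B.coord (Fin.last (2 * p)) ⁅B i, B j⁆ := fun j => by
    conv_lhs => rw [← B.sum_repr u]
    simp only [sum_lie, smul_lie, map_sum, map_smul, smul_eq_mul]
  have hk := k.isLt
  rcases Nat.even_or_odd k.val with ⟨r, hr⟩ | ⟨r, hr⟩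
  · have h := expand ⟨k + 1, by omega⟩
    rw [hu, map_zero, Finset.sum_eq_single k.castSucc] at h
    · rw [hB, if_pos ⟨by simp; omega, rfl⟩, B.coord_apply, B.repr_self] at h
      simpa using h.symm
    · intro i _ hi
      have hi' : i.val ≠ k.val := fun h => hi (Fin.ext h)
      rw [hB, if_neg (by simp; omega), if_neg (by simp; omega), map_zero, mul_zero]
    · simp
  · have h := expand ⟨k - 1, by omega⟩
    rw [hu, map_zero, Finset.sum_eq_single k.castSucc] at h
    · rw [hB, if_neg (by simp), if_pos ⟨by simp; omega, by simp; omega⟩, map_neg,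
        B.coord_apply, B.repr_self] at h
      simpa using h.symm
    · intro i _ hi
      have hi' : i.val ≠ k.val := fun h => hi (Fin.ext h)
      rw [hB, if_neg (by simp; omega), if_neg (by simp; omega), map_zero, mul_zero]
    · simp

end IsHeisenbergBasis

variable (B : Basis (Fin (2 * p + 1)) K L)

noncomputable def cocycleCoords :
    (L →ₗ[K] L →ₗ[K] L) →ₗ[K] (StrictPair (2 * p) → K) × (Fin (2 * p) → K) where
  toFun φ := (fun q => B.coord (Fin.last (2 * p)) (φ (B q.lo.castSucc) (B q.hi.castSucc)),
    -- `B 0` and `B 1` exist only for `p ≥ 1`, which the index `k` witnesses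
    fun k => B.repr (φ (B (Fin.castSucc ⟨0, by have := k.isLt; omega⟩))
      (B (Fin.castSucc ⟨1, by have := k.isLt; omega⟩))) k.castSucc)
  map_add' φ ψ := by ext <;> simp
  map_smul' c φ := by ext <;> simp

variable {B}

theorem cocycleOf_mem_skewCocycles_of_isHeisenbergBasis (hB : IsHeisenbergBasis B)
    (a : StrictPair (2 * p) → K) (v : L) :
    cocycleOf (B (Fin.last (2 * p))) (B.coord (Fin.last (2 * p))) (StrictPair.skewForm B a) v
      ∈ skewCocycles K L :=
  cocycleOf_mem_skewCocycles (by simp) hB.lie_last_left hB.lie_eq_coord_smul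
    (StrictPair.skewForm_swap B a) (StrictPair.skewForm_last_left B a) v

theorem cocycleCoords_cocycleOf (hB : IsHeisenbergBasis B) (a : StrictPair (2 * p) → K)
    (w : Fin (2 * p) → K) :
    cocycleCoords B (cocycleOf (B (Fin.last (2 * p))) (B.coord (Fin.last (2 * p)))
      (StrictPair.skewForm B a) (∑ k, w k • B k.castSucc)) = (a, w) := by
  refine Prod.ext (funext fun q => ?_) (funext fun k => ?_)
  · simp [cocycleCoords, StrictPair.skewForm_lo_hi, B.coord_last_castSucc]
  · have h1 : 1 < 2 * p := by have := k.isLt; omega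
    simp only [cocycleCoords, LinearMap.coe_mk, AddHom.coe_mk, cocycleOf_apply,
      hB.lie_castSucc_zero_one h1, B.coord_last_castSucc, zero_smul, sub_zero, add_zero]
    simp [Finsupp.single_apply]

theorem apply_eq_coord_last_smul (hB : IsHeisenbergBasis B) {φ : L →ₗ[K] L →ₗ[K] L}
    (hφ : φ ∈ skewCocycles K L) (hw : (cocycleCoords B φ).2 = 0) (X Y : L) :
    φ X Y = B.coord (Fin.last (2 * p)) (φ X Y) • B (Fin.last (2 * p)) := by
  refine B.eq_coord_last_smul fun k => ?_
  have hp : 1 < 2 * p := by have := k.isLt; omega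
  set e := B (Fin.castSucc ⟨0, by omega⟩)
  set f := B (Fin.castSucc ⟨1, hp⟩)
  have hcentral : ∀ j, ⁅φ X Y - B.coord (Fin.last (2 * p)) ⁅X, Y⁆ • φ e f, B j⁆ = 0 := fun j => by
    rw [sub_lie, smul_lie, lie_apply_eq_of_mem_skewCocycles hB.lie_eq_coord_smul hφ,
      lie_apply_eq_of_mem_skewCocycles hB.lie_eq_coord_smul hφ, hB.lie_castSucc_zero_one hp]
    simp
  have hwk : B.repr (φ e f) k.castSucc = 0 := congr_fun hw k
  have h := hB.repr_castSucc_eq_zero_of_forall_lie_eq_zero hcentral k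
  rwa [map_sub, map_smul, Finsupp.sub_apply, Finsupp.smul_apply, hwk, smul_zero, sub_zero] at h

theorem eq_zero_of_cocycleCoords_eq_zero [CharZero K] (hB : IsHeisenbergBasis B)
    {φ : L →ₗ[K] L →ₗ[K] L} (hφ : φ ∈ skewCocycles K L) (h0 : cocycleCoords B φ = 0) : φ = 0 := by
  have halt : ∀ X, φ X X = 0 := fun X => by
    have h := hφ.1 X X
    rwa [eq_neg_iff_add_eq_zero, ← two_smul K, smul_eq_zero_iff_right two_ne_zero] at h
  have hval := apply_eq_coord_last_smul hB hφ (congr_arg Prod.snd h0)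
  have hz : ∀ j : Fin (2 * p), φ (B (Fin.last (2 * p))) (B j.castSucc) = 0 := fun j => by
    have hp : 1 < 2 * p := by have := j.isLt; omega
    have h := hφ.2 (B (Fin.castSucc ⟨0, by omega⟩)) (B (Fin.castSucc ⟨1, hp⟩)) (B j.castSucc)
    rwa [hB.lie_castSucc_zero_one hp, hval (B (Fin.castSucc ⟨0, _⟩)), smul_lie, hB.lie_last_left, smul_zero,
      add_zero] at h
  have hζ : ∀ i j, B.coord (Fin.last (2 * p)) (φ (B i) (B j)) = 0 := by
    intro i j
    induction i using Fin.lastCases with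
    | last =>
      induction j using Fin.lastCases with
      | last => rw [halt, map_zero]
      | cast j => rw [hz, map_zero]
    | cast i =>
      induction j using Fin.lastCases with
      | last => rw [hφ.1, hz, neg_zero, map_zero]
      | cast j =>
        rcases lt_trichotomy i j with h | rfl | h
        · exact congr_fun (congr_arg Prod.fst h0) ⟨j, ⟨i, h⟩⟩
        · rw [halt, map_zero]
        · rw [hφ.1, map_neg, neg_eq_zero]
          exact congr_fun (congr_arg Prod.fst h0) ⟨i, ⟨j, h⟩⟩
  exact LinearMap.ext_basis B B fun i j => by rw [hval, hζ, zero_smul]; rfl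

theorem finrank_skewCocycles [CharZero K] (hB : IsHeisenbergBasis B) :
    finrank K (skewCocycles K L) = p * (2 * p + 1) := by
  let E := (cocycleCoords B).domRestrict (skewCocycles K L)
  have hinj : Function.Injective E := LinearMap.ker_eq_bot.1 <| LinearMap.ker_eq_bot'.2
    fun φ h => Subtype.ext (eq_zero_of_cocycleCoords_eq_zero hB φ.2 h)
  have hsurj : Function.Surjective E := fun ⟨a, w⟩ =>
    ⟨⟨_, cocycleOf_mem_skewCocycles_of_isHeisenbergBasis hB a _⟩, cocycleCoords_cocycleOf hB a w⟩
  have hcard := StrictPair.card_mul_two (2 * p)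
  rw [(LinearEquiv.ofBijective E ⟨hinj, hsurj⟩).finrank_eq, finrank_prod, finrank_pi, finrank_pi,
    Fintype.card_fin]
  obtain _ | p := p
  · simp
  · rw [show 2 * (p + 1) - 1 = 2 * p + 1 by omega] at hcard
    nlinarith

end Heisenberg

theorem heisenberg_cocycle_space_dim_general
    {K L : Type*} [Field K] [CharZero K]
    [LieRing L] [LieAlgebra K L] (p : ℕ)
    (B : Module.Basis (Fin (2 * p + 1)) K L)
    (hB : ∀ i j : Fin (2 * p + 1),
      ⁅B i, B j⁆ =
        if i.val % 2 = 0 ∧ j.val = i.val + 1 then B (Fin.last (2 * p))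
        else if j.val % 2 = 0 ∧ i.val = j.val + 1 then -B (Fin.last (2 * p))
        else 0) :
    Module.finrank K
      (Submodule.span K {φ : L →ₗ[K] L →ₗ[K] L |
        (∀ X Y : L, φ X Y = - φ Y X) ∧
        (∀ X Y Z : L, φ ⁅X, Y⁆ Z + ⁅φ X Y, Z⁆ = 0)})
      = p * (2 * p + 1) := by
  change finrank K (Submodule.span K (skewCocycles K L : Set (L →ₗ[K] L →ₗ[K] L))) = _
  rw [Submodule.span_eq]
  exact finrank_skewCocycles hB

/-- For the `(2p+1)`-dimensional Heisenberg Lie algebra, the space of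
skew-symmetric bilinear cocycles `φ` with `φ([X,Y],Z) + [φ(X,Y),Z] = 0` has
dimension `p(2p+1)`. -/
theorem heisenberg_cocycle_space_dim
    {K L : Type*} [Field K] [IsAlgClosed K] [CharZero K]
    [LieRing L] [LieAlgebra K L] (p : ℕ)
    (B : Module.Basis (Fin (2 * p + 1)) K L)
    (hB : ∀ i j : Fin (2 * p + 1),
      ⁅B i, B j⁆ =
        if i.val % 2 = 0 ∧ j.val = i.val + 1 then B (Fin.last (2 * p))
        else if j.val % 2 = 0 ∧ i.val = j.val + 1 then -B (Fin.last (2 * p))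
        else 0) :
    Module.finrank K
      (Submodule.span K {φ : L →ₗ[K] L →ₗ[K] L |
        (∀ X Y : L, φ X Y = - φ Y X) ∧
        (∀ X Y Z : L, φ ⁅X, Y⁆ Z + ⁅φ X Y, Z⁆ = 0)})
      = p * (2 * p + 1) :=
  heisenberg_cocycle_space_dim_general p B hB
end

section
/- Let k_{2p+1} be the (2p+1)-dimensional two-step nilpotent Lie algebra with basis X1,...,X_{2p+1} and nonzero brackets [X1, X_{2i}] = X_{2i+1} for 1 ≤ i ≤ p. Then any (2p+1)-dimensional two-step nilpotent Lie algebra with characteristic sequence (2,...,2,1) (with 2 appearing p times) admits a basis in which its brackets are [X1, X_{2i}] = X_{2i+1} for 1 ≤ i ≤ p and [X_{2i}, X_{2j}] = Σ_{k=1}^p a_{2i,2j}^{2k+1} X_{2k+1} for 1 ≤ i < j ≤ p; equivalently, it is isomorphic to a linear deformation μ0 + tφ of k_{2p+1} for some t and some cocycle φ supported on pairs (X_{2i}, X_{2j}) with values in span{X3, X5, ..., X_{2p+1}}. -/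
/-!
Take `X` with `rank (ad X) = p` and put `A = ad X`. Two-step nilpotency makes `range A` central,
so `A² = 0` and `X ∉ range A`. Choosing `Y_i` with `[X, Y_i] = Z_i` for a basis `Z_i` of
`range A`, the vectors `X, Y_i, Z_i` form a Jordan basis of `A`. By dimension count
`ker A = K X ⊕ range A`; a bracket `[Y_i, Y_j]` is central, hence in `ker A`, and its
`X`-component vanishes because `X` is not central.
-/

open Module Submodule LinearMap

section SquareZero

variable {K V : Type*} [Field K] [AddCommGroup V] [Module K V]

theorem LinearMap.ker_eq_span_singleton_sup_range [FiniteDimensional K V] {A : V →ₗ[K] V}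
    {x : V} (hsq : range A ≤ ker A) (hx : A x = 0) (hxr : x ∉ range A)
    (hdim : finrank K V = 2 * finrank K (range A) + 1) :
    ker A = span K {x} ⊔ range A := by
  have hle : span K {x} ⊔ range A ≤ ker A := sup_le ((span_singleton_le_iff_mem _ _).2 hx) hsq
  refine (eq_of_le_of_finrank_eq hle ?_).symm
  have hx0 : x ≠ 0 := fun h => hxr (h ▸ zero_mem _)
  have hdisj : range A ⊓ span K {x} = ⊥ := ((disjoint_span_singleton' hx0).2 hxr).eq_bot
  have hsup := finrank_sup_add_finrank_inf_eq (span K {x}) (range A)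
  rw [inf_comm, hdisj, finrank_bot, finrank_span_singleton hx0] at hsup
  have := A.finrank_range_add_finrank_ker
  omega

theorem LinearMap.linearIndependent_option_sum_elim {ι : Type*} {A : V →ₗ[K] V} {x : V}
    {y : ι → V} (hy : LinearIndependent K (A ∘ y)) (hsq : range A ≤ ker A) (hx : A x = 0)
    (hxr : x ∉ range A) :
    LinearIndependent K (fun o => Option.casesOn' o x (Sum.elim y (A ∘ y))) := by
  have hyker : Disjoint (span K (Set.range y)) (ker A) := range_ker_disjoint hy
  have hAy : span K (Set.range (A ∘ y)) ≤ range A :=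
    span_le.2 (by rintro _ ⟨i, rfl⟩; exact mem_range_self A (y i))
  refine (hy.of_comp.sum_type hy (hyker.mono_right (hAy.trans hsq))).option ?_
  rw [Set.Sum.elim_range, span_union, mem_sup]
  rintro ⟨u, hu, r, hr, rfl⟩
  have hAu : A u = 0 := by simpa [mem_ker.1 (hsq (hAy hr))] using hx
  obtain rfl : u = 0 := (disjoint_def.1 hyker) u hu hAu
  exact hxr (by simpa using hAy hr)

end SquareZero

section TwoStep

variable {K L : Type*} [Field K] [LieRing L] [LieAlgebra K L]

theorem lie_eq_zero_of_mem_range_ad (h : ∀ X Y Z : L, ⁅⁅X, Y⁆, Z⁆ = 0) {X r : L}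
    (hr : r ∈ range (LieAlgebra.ad K L X)) (u : L) : ⁅r, u⁆ = 0 := by
  obtain ⟨w, rfl⟩ := hr
  exact h X w u

theorem range_ad_le_ker_ad (h : ∀ X Y Z : L, ⁅⁅X, Y⁆, Z⁆ = 0) (X : L) :
    range (LieAlgebra.ad K L X) ≤ ker (LieAlgebra.ad K L X) := fun r hr => by
  rw [mem_ker, LieAlgebra.ad_apply, ← lie_skew, lie_eq_zero_of_mem_range_ad h hr, neg_zero]

theorem notMem_range_ad_self (h : ∀ X Y Z : L, ⁅⁅X, Y⁆, Z⁆ = 0) {X : L}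
    (hX : LieAlgebra.ad K L X ≠ 0) : X ∉ range (LieAlgebra.ad K L X) := fun hXr =>
  hX (LinearMap.ext (lie_eq_zero_of_mem_range_ad h hXr))

theorem mem_range_ad_of_forall_lie_eq_zero (h : ∀ X Y Z : L, ⁅⁅X, Y⁆, Z⁆ = 0) {X c : L}
    (hX : LieAlgebra.ad K L X ≠ 0)
    (hker : ker (LieAlgebra.ad K L X) = span K {X} ⊔ range (LieAlgebra.ad K L X))
    (hc : ∀ u : L, ⁅c, u⁆ = 0) : c ∈ range (LieAlgebra.ad K L X) := by
  have hck : c ∈ ker (LieAlgebra.ad K L X) := by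
    rw [mem_ker, LieAlgebra.ad_apply, ← lie_skew, hc, neg_zero]
  rw [hker, mem_sup] at hck
  obtain ⟨_, hs, r, hr, rfl⟩ := hck
  obtain ⟨a, rfl⟩ := mem_span_singleton.1 hs
  -- `a • X = c - r` is central, and `X` is not
  obtain rfl : a = 0 := by
    by_contra ha
    refine hX (LinearMap.ext fun u => ?_)
    have := hc u
    rw [add_lie, lie_eq_zero_of_mem_range_ad h hr, add_zero, smul_lie, smul_eq_zero] at this
    exact this.resolve_left ha
  simpa using hr

end TwoStep

noncomputable def finOddEvenEquiv (p : ℕ) : Option (Fin p ⊕ Fin p) ≃ Fin (2 * p + 1) :=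
  Equiv.ofBijective
    (fun o => match o with
      | none => ⟨0, by omega⟩
      | some (.inl i) => ⟨2 * i.val + 1, by omega⟩
      | some (.inr i) => ⟨2 * i.val + 2, by omega⟩)
    ((Fintype.bijective_iff_injective_and_card _).2
      ⟨by rintro (_ | i | i) (_ | j | j) hij <;> simp [Fin.ext_iff] at hij ⊢ <;> omega,
        by simp; ring⟩)

/-- Any `(2p+1)`-dimensional two-step nilpotent Lie algebra with characteristic
sequence `(2,…,2,1)` (i.e. some `ad X` has rank `p`, the maximal possible value)
admits a basis `X_1, …, X_{2p+1}` in which the brackets are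
`[X_1, X_{2i}] = X_{2i+1}` and `[X_{2i}, X_{2j}] ∈ span{X_3, X_5, …, X_{2p+1}}`,
with the `X_{2i+1}` central; equivalently, it is a linear deformation of the Lie
algebra `k_{2p+1}`. -/
theorem two_step_char_seq_max_odd_normal_form
    {K L : Type*} [Field K]
    [LieRing L] [LieAlgebra K L] (p : ℕ)
    (hdim : Module.finrank K L = 2 * p + 1)
    (h2 : ∀ X Y Z : L, ⁅⁅X, Y⁆, Z⁆ = 0)
    (hcs : ∃ X : L, Module.finrank K (LinearMap.range (LieAlgebra.ad K L X)) = p) :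
    ∃ B : Module.Basis (Fin (2 * p + 1)) K L,
      (∀ i : Fin p,
        ⁅B ⟨0, by omega⟩, B ⟨2 * i.val + 1, by have := i.isLt; omega⟩⁆
          = B ⟨2 * i.val + 2, by have := i.isLt; omega⟩) ∧
      (∀ i j : Fin p,
        ⁅B ⟨2 * i.val + 1, by have := i.isLt; omega⟩,
          B ⟨2 * j.val + 1, by have := j.isLt; omega⟩⁆
          ∈ Submodule.span K
            (Set.range (fun k : Fin p =>
              B ⟨2 * k.val + 2, by have := k.isLt; omega⟩))) ∧
      (∀ i : Fin p, ∀ Y : L,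
        ⁅B ⟨2 * i.val + 2, by have := i.isLt; omega⟩, Y⁆ = 0) := by
  have : FiniteDimensional K L := finite_of_finrank_eq_succ hdim
  rcases Nat.eq_zero_or_pos p with rfl | hp
  · exact ⟨(finBasis K L).reindex (finCongr hdim), finZeroElim, finZeroElim, finZeroElim⟩
  obtain ⟨X, hX⟩ := hcs
  set A := LieAlgebra.ad K L X
  have hA : A ≠ 0 := fun h => by
    rw [h, range_zero, finrank_bot] at hX
    omega
  let Z : Basis (Fin p) K (range A) := finBasisOfFinrankEq K _ hX
  choose Y hY using fun i => (Z i).2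
  have hAY : ⇑A ∘ Y = (range A).subtype ∘ Z := funext hY
  have hspan : span K (Set.range (⇑A ∘ Y)) = range A := by
    rw [hAY, Set.range_comp, ← Submodule.map_span, Z.span_eq, map_subtype_top]
  have hli := linearIndependent_option_sum_elim (hAY ▸ Z.linearIndependent.map' _ (ker_subtype _))
    (range_ad_le_ker_ad h2 X) (lie_self X) (notMem_range_ad_self h2 hA)
  let B := (basisOfLinearIndependentOfCardEqFinrank hli (by simp [hdim]; ring)).reindex
    (finOddEvenEquiv p)
  have hB : ∀ o, B (finOddEvenEquiv p o) = Option.casesOn' o X (Sum.elim Y (A ∘ Y)) := by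
    simp [B, A]
  have hB0 : B ⟨0, by omega⟩ = X := hB none
  have hBY (i : Fin p) : B ⟨2 * i.val + 1, by omega⟩ = Y i := hB (some (.inl i))
  have hBZ (i : Fin p) : B ⟨2 * i.val + 2, by omega⟩ = A (Y i) := hB (some (.inr i))
  refine ⟨B, fun i => by rw [hB0, hBY, hBZ]; rfl, fun i j => ?_, fun i u => ?_⟩
  · simp_rw [hBY, hBZ]
    rw [← Function.comp_def, hspan]
    exact mem_range_ad_of_forall_lie_eq_zero h2 hA (ker_eq_span_singleton_sup_range
      (range_ad_le_ker_ad h2 X) (lie_self X) (notMem_range_ad_self h2 hA) (by omega))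
      (h2 (Y i) (Y j))
  · rw [hBZ]
    exact lie_eq_zero_of_mem_range_ad h2 (mem_range_self A (Y i)) u
end
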